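/- Let X ∈ ℝ^{m×n} and let r be a non-negative integer with r ≤ min(m,n). Then the truncated nuclear norm Σ_{i=r+1}^{min(m,n)} σ_i(X) equals ‖X‖_* minus the supremum of tr(A·X·Bᵀ) taken over all real matrices A ∈ ℝ^{r×m}, B ∈ ℝ^{r×n} with A·Aᵀ = I_r and B·Bᵀ = I_r, and this supremum is attained. -/

import Mathlib

open Matrix

theorem Matrix.isHermitian_transpose_mul_self {m n : Type*} [Fintype m]
    (A : Matrix m n ℝ) : (Aᵀ * A).IsHermitian := by
  simpa using Matrix.isHermitian_conjTranspose_mul_self A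

/-- The `i`-th singular value (0-indexed, in decreasing order) of a real `m × n` matrix `X`:
the nonnegative square roots of the eigenvalues of `Xᵀ * X`, sorted decreasingly,
with value `0` for indices `i ≥ n`. -/
noncomputable def sval {m n : ℕ} (X : Matrix (Fin m) (Fin n) ℝ) (i : ℕ) : ℝ :=
  if h : i < n then
    Real.sqrt ((Matrix.isHermitian_transpose_mul_self X).eigenvalues
      (Tuple.sort (fun j => -((Matrix.isHermitian_transpose_mul_self X).eigenvalues j)) ⟨i, h⟩))
  else 0

/-! Let `v j` be orthonormal eigenvectors of `Xᵀ X`, ordered so that `σ j = ‖X v j‖` decreases,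
and `u j = X v j / σ j`. For `A`, `B` with orthonormal rows `a k`, `b k`,
`tr (A X Bᵀ) = ∑ j, σ j * c j` with `c j = ∑ k, ⟪b k, v j⟫ * ⟪a k, u j⟫`. By AM-GM, `c j` is at
most the mean of `∑ k, ⟪a k, u j⟫ ^ 2` and `∑ k, ⟪b k, v j⟫ ^ 2`; by Bessel's inequality these
weights are at most `1` each and sum to at most `r`, so the trace is at most `σ 0 + ⋯ + σ (r - 1)`.
The bound is attained by `b k = v k` and `a k = u k`, completed to an orthonormal family. -/

open Finset
open scoped RealInnerProductSpace

theorem Finset.sum_mul_le_sum_range_of_antitone {ι : Type*} (s : Finset ι) {f : ι → ℕ}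
    (hf : Set.InjOn f s) {σ : ℕ → ℝ} {r : ℕ} (hσ : Antitone σ) (hσr : 0 ≤ σ r) {c : ι → ℝ}
    (hc0 : ∀ j ∈ s, 0 ≤ c j) (hc1 : ∀ j ∈ s, c j ≤ 1) (hc : ∑ j ∈ s, c j ≤ r) :
    ∑ j ∈ s, σ (f j) * c j ≤ ∑ i ∈ range r, σ i := by
  classical
  -- each term is at most `σ r * c j`, plus `σ (f j) - σ r` at the positions `f j < r`
  have key : ∀ j ∈ s, σ (f j) * c j ≤ σ r * c j + if f j < r then σ (f j) - σ r else 0 := by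
    intro j hj
    split_ifs with h
    · nlinarith [hσ h.le, hc1 j hj]
    · nlinarith [hσ (not_lt.1 h), hc0 j hj]
  have hlarge : ∑ j ∈ s with f j < r, (σ (f j) - σ r) ≤ ∑ i ∈ range r, (σ i - σ r) := by
    rw [← sum_image (f := fun i => σ i - σ r) (hf.mono (filter_subset _ s))]
    refine sum_le_sum_of_subset_of_nonneg ?_ fun i hi _ => sub_nonneg.2 (hσ (mem_range.1 hi).le)
    intro i hi
    obtain ⟨j, hj, rfl⟩ := mem_image.1 hi
    exact mem_range.2 (mem_filter.1 hj).2
  calc ∑ j ∈ s, σ (f j) * c j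
      ≤ ∑ j ∈ s, (σ r * c j + if f j < r then σ (f j) - σ r else 0) := sum_le_sum key
    _ = σ r * ∑ j ∈ s, c j + ∑ j ∈ s with f j < r, (σ (f j) - σ r) := by
      rw [sum_add_distrib, mul_sum, sum_filter]
    _ ≤ σ r * r + ∑ i ∈ range r, (σ i - σ r) :=
      add_le_add (mul_le_mul_of_nonneg_left hc hσr) hlarge
    _ = ∑ i ∈ range r, σ i := by
      rw [sum_sub_distrib, sum_const, card_range, nsmul_eq_mul]; ring

theorem Orthonormal.exists_orthonormal_extension_of_card_le {𝕜 E : Type*} [RCLike 𝕜]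
    [NormedAddCommGroup E] [InnerProductSpace 𝕜 E] [FiniteDimensional 𝕜 E] {ι : Type*}
    [Fintype ι] (hcard : Fintype.card ι ≤ Module.finrank 𝕜 E) {u : ι → E} {s : Set ι}
    (hu : Orthonormal 𝕜 (s.domRestrict u)) :
    ∃ a : ι → E, Orthonormal 𝕜 a ∧ ∀ i ∈ s, a i = u i := by
  classical
  -- pad `ι` with fresh indices up to the dimension, so that the extension is a basis
  have hcard' :
      Module.finrank 𝕜 E = Fintype.card (ι ⊕ Fin (Module.finrank 𝕜 E - Fintype.card ι)) := by
    rw [Fintype.card_sum, Fintype.card_fin, Nat.add_sub_cancel' hcard]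
  have hinl : Orthonormal 𝕜 ((Sum.inl '' s).domRestrict
      (Sum.elim u (0 : Fin (Module.finrank 𝕜 E - Fintype.card ι) → E))) := by
    rw [orthonormal_iff_ite] at hu ⊢
    rintro ⟨_, i, hi, rfl⟩ ⟨_, j, hj, rfl⟩
    simpa [Subtype.ext_iff] using hu ⟨i, hi⟩ ⟨j, hj⟩
  obtain ⟨b, hb⟩ := hinl.exists_orthonormalBasis_extension_of_card_eq hcard'
  exact ⟨b ∘ Sum.inl, b.orthonormal.comp _ Sum.inl_injective,
    fun i hi => hb _ (Set.mem_image_of_mem _ hi)⟩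

section RealInnerProductSpace

variable {E F : Type*} [NormedAddCommGroup E] [InnerProductSpace ℝ E]
  [NormedAddCommGroup F] [InnerProductSpace ℝ F]

theorem exists_orthonormal_smul_eq_of_inner_eq_ite {ι : Type*} [DecidableEq ι] {w : ι → E}
    {s : ι → ℝ}
    (hw : ∀ i j, ⟪w i, w j⟫ = if i = j then s i ^ 2 else 0) :
    ∃ u : ι → E, (∀ i, w i = s i • u i) ∧ Orthonormal ℝ ({i | s i ≠ 0}.domRestrict u) := by
  refine ⟨fun i => (s i)⁻¹ • w i, fun i => ?_, ?_⟩
  · by_cases hs : s i = 0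
    · have : w i = 0 := by simpa [hs] using hw i i
      simp [this]
    · rw [smul_smul, mul_inv_cancel₀ hs, one_smul]
  · rw [orthonormal_iff_ite]
    rintro ⟨i, hi⟩ ⟨j, hj⟩
    simp only [Set.domRestrict, real_inner_smul_left, real_inner_smul_right, hw, Subtype.ext_iff]
    split_ifs with h
    · subst h; field_simp [show s i ≠ 0 from hi]
    · simp

theorem sum_inner_apply_eq_sum_mul {ι κ : Type*} [Fintype ι] [Fintype κ] (T : F →ₗ[ℝ] E)
    (v : OrthonormalBasis ι ℝ F) {σ : ι → ℝ} {u : ι → E} (hTv : ∀ j, T (v j) = σ j • u j)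
    (a : κ → E) (b : κ → F) :
    ∑ k, ⟪a k, T (b k)⟫ = ∑ j, σ j * ∑ k, ⟪b k, v j⟫ * ⟪a k, u j⟫ := by
  have hb : ∀ k, ⟪a k, T (b k)⟫ = ∑ j, σ j * (⟪b k, v j⟫ * ⟪a k, u j⟫) := fun k => by
    conv_lhs => rw [← v.sum_repr' (b k)]
    simp only [map_sum, map_smul, hTv, inner_sum, real_inner_smul_right, real_inner_comm (b k)]
    exact sum_congr rfl fun j _ => by ring
  simp only [hb, mul_sum]
  exact sum_comm

theorem Orthonormal.sum_sum_inner_sq_le {κ ι : Type*} [Fintype κ] [Fintype ι] {a : κ → E}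
    (ha : Orthonormal ℝ a) {u : ι → E} {S : Set ι} [DecidablePred (· ∈ S)]
    (hu : Orthonormal ℝ (S.domRestrict u)) :
    ∑ j ∈ univ.filter (· ∈ S), ∑ k, ⟪a k, u j⟫ ^ 2 ≤ Fintype.card κ := by
  rw [sum_comm]
  calc ∑ k, ∑ j ∈ univ.filter (· ∈ S), ⟪a k, u j⟫ ^ 2 ≤ ∑ _k : κ, (1 : ℝ) :=
        sum_le_sum fun k _ => by
          have := hu.sum_inner_products_le (s := univ) (a k)
          simp only [ha.1 k, Real.norm_eq_abs, sq_abs, one_pow, Set.domRestrict] at this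
          rw [sum_subtype _ (p := (· ∈ S)) (by simp)]
          simpa only [real_inner_comm (a k)] using this
    _ = Fintype.card κ := by simp

theorem sum_inner_apply_le_sum_range {n r : ℕ} (T : F →ₗ[ℝ] E)
    (v : OrthonormalBasis (Fin n) ℝ F) {σ : ℕ → ℝ} (hσ : Antitone σ) (hσ0 : ∀ i, 0 ≤ σ i)
    {u : Fin n → E} (hTv : ∀ j, T (v j) = σ j • u j)
    (hu : Orthonormal ℝ ({j : Fin n | σ j ≠ 0}.domRestrict u))
    {a : Fin r → E} {b : Fin r → F} (ha : Orthonormal ℝ a) (hb : Orthonormal ℝ b) :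
    ∑ k, ⟪a k, T (b k)⟫ ≤ ∑ i ∈ range r, σ i := by
  classical
  set s : Finset (Fin n) := univ.filter (· ∈ {j : Fin n | σ j ≠ 0})
  set α : Fin n → ℝ := fun j => ∑ k, ⟪a k, u j⟫ ^ 2
  set β : Fin n → ℝ := fun j => ∑ k, ⟪b k, v j⟫ ^ 2
  have hα : ∀ j ∈ s, α j ≤ 1 := fun j hj => by
    have hnorm : ‖u j‖ = 1 := hu.1 ⟨j, (mem_filter.1 hj).2⟩
    simpa [hnorm] using ha.sum_inner_products_le (s := univ) (u j)
  have hβ : ∀ j, β j ≤ 1 := fun j => by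
    simpa [v.orthonormal.1 j] using hb.sum_inner_products_le (s := univ) (v j)
  have hαs : ∑ j ∈ s, α j ≤ r := (ha.sum_sum_inner_sq_le hu).trans_eq (by simp)
  have hβs : ∑ j ∈ s, β j ≤ r :=
    (hb.sum_sum_inner_sq_le (v.orthonormal.comp _ Subtype.val_injective)).trans_eq (by simp)
  have hcross : ∀ j : Fin n, ∑ k, ⟪b k, v j⟫ * ⟪a k, u j⟫ ≤ (α j + β j) / 2 := fun j => by
    simp only [α, β, ← sum_add_distrib, sum_div]
    exact sum_le_sum fun k _ => by nlinarith [two_mul_le_add_sq ⟪b k, v j⟫ ⟪a k, u j⟫]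
  rw [sum_inner_apply_eq_sum_mul T v hTv]
  calc ∑ j : Fin n, σ j * ∑ k, ⟪b k, v j⟫ * ⟪a k, u j⟫
      = ∑ j ∈ s, σ j * ∑ k, ⟪b k, v j⟫ * ⟪a k, u j⟫ :=
        (sum_filter_of_ne fun j _ h => left_ne_zero_of_mul h).symm
    _ ≤ ∑ j ∈ s, σ j * ((α j + β j) / 2) :=
        sum_le_sum fun j _ => mul_le_mul_of_nonneg_left (hcross j) (hσ0 j)
    _ ≤ ∑ i ∈ range r, σ i := by
        refine s.sum_mul_le_sum_range_of_antitone Fin.val_injective.injOn hσ (hσ0 r)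
          (fun j _ => by positivity) (fun j hj => by linarith [hα j hj, hβ j]) ?_
        rw [← sum_div, sum_add_distrib]
        linarith

theorem exists_sum_inner_apply_eq_sum_range [FiniteDimensional ℝ E] {n r : ℕ} (T : F →ₗ[ℝ] E)
    (v : OrthonormalBasis (Fin n) ℝ F) {σ : ℕ → ℝ} {u : Fin n → E}
    (hTv : ∀ j, T (v j) = σ j • u j) (hu : Orthonormal ℝ ({j : Fin n | σ j ≠ 0}.domRestrict u))
    (hrE : r ≤ Module.finrank ℝ E) (hrn : r ≤ n) :
    ∃ (a : Fin r → E) (b : Fin r → F), Orthonormal ℝ a ∧ Orthonormal ℝ b ∧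
      ∑ k, ⟪a k, T (b k)⟫ = ∑ i ∈ range r, σ i := by
  have hu' : Orthonormal ℝ ({k : Fin r | σ k ≠ 0}.domRestrict (u ∘ Fin.castLE hrn)) :=
    hu.comp (fun k : {k : Fin r | σ k ≠ 0} => ⟨Fin.castLE hrn k, k.2⟩) fun _ _ h =>
      Subtype.ext (Fin.castLE_injective hrn (congrArg Subtype.val h))
  obtain ⟨a, ha, hau⟩ := hu'.exists_orthonormal_extension_of_card_le (by simpa using hrE)
  refine ⟨a, v ∘ Fin.castLE hrn, ha, v.orthonormal.comp _ (Fin.castLE_injective hrn), ?_⟩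
  rw [← Fin.sum_univ_eq_sum_range]
  refine sum_congr rfl fun k _ => ?_
  simp only [Function.comp_apply, hTv, real_inner_smul_right]
  by_cases hk : σ k = 0
  · simp [hk]
  · have hnorm : ‖u (Fin.castLE hrn k)‖ = 1 := hu'.1 ⟨k, hk⟩
    simp [hau k hk, hnorm]

end RealInnerProductSpace

namespace Matrix

theorem mul_transpose_self_eq_one_iff_orthonormal {κ ι : Type*} [Fintype ι] [DecidableEq κ]
    (A : Matrix κ ι ℝ) : A * Aᵀ = 1 ↔ Orthonormal ℝ fun k => WithLp.toLp 2 (A k) := by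
  rw [← gram_eq_one_iff_orthonormal]
  refine Eq.congr_left (ext fun i j => ?_)
  simp [gram_apply, mul_apply, EuclideanSpace.inner_toLp_toLp, dotProduct, mul_comm]

theorem trace_mul_mul_transpose_eq_sum_inner {κ ι ι' : Type*} [Fintype κ] [Fintype ι]
    [Fintype ι'] [DecidableEq ι] (A : Matrix κ ι' ℝ) (X : Matrix ι' ι ℝ) (B : Matrix κ ι ℝ) :
    trace (A * X * Bᵀ) =
      ∑ k, ⟪WithLp.toLp 2 (A k), toLpLin 2 2 X (WithLp.toLp 2 (B k))⟫ := by
  simp only [trace, diag, mul_apply, transpose_apply, toLpLin_toLp, toLin'_apply,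
    EuclideanSpace.inner_toLp_toLp, star_trivial, dotProduct, mulVec, sum_mul]
  refine sum_congr rfl fun k _ => ?_
  rw [sum_comm]
  exact sum_congr rfl fun i _ => sum_congr rfl fun j _ => by ring

end Matrix

theorem sval_nonneg {m n : ℕ} (X : Matrix (Fin m) (Fin n) ℝ) (i : ℕ) : 0 ≤ sval X i := by
  unfold sval
  split_ifs <;> positivity

theorem sval_antitone {m n : ℕ} (X : Matrix (Fin m) (Fin n) ℝ) : Antitone (sval X) := by
  intro i j hij
  unfold sval
  split_ifs with hj hi hi
  · have := Tuple.monotone_sort (fun k => -(isHermitian_transpose_mul_self X).eigenvalues k)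
      (show (⟨i, hi⟩ : Fin n) ≤ ⟨j, hj⟩ from hij)
    exact Real.sqrt_le_sqrt (by simpa using this)
  · omega
  · positivity
  · exact le_rfl

theorem exists_orthonormalBasis_inner_toLpLin_eq {m n : ℕ} (X : Matrix (Fin m) (Fin n) ℝ) :
    ∃ v : OrthonormalBasis (Fin n) ℝ (EuclideanSpace ℝ (Fin n)), ∀ i j,
      ⟪toLpLin 2 2 X (v i), toLpLin 2 2 X (v j)⟫ = if i = j then sval X i ^ 2 else 0 := by
  set H := isHermitian_transpose_mul_self X
  set p := Tuple.sort fun j => -H.eigenvalues j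
  refine ⟨H.eigenvectorBasis.reindex p.symm, fun i j => ?_⟩
  have hsval : sval X i ^ 2 = H.eigenvalues (p i) := by
    rw [sval, dif_pos i.isLt]
    exact Real.sq_sqrt (X.eigenvalues_conjTranspose_mul_self_nonneg _)
  simp only [OrthonormalBasis.reindex_apply, Equiv.symm_symm, toLpLin_apply,
    EuclideanSpace.inner_toLp_toLp, star_trivial]
  have horth : (H.eigenvectorBasis (p i)).ofLp ⬝ᵥ (H.eigenvectorBasis (p j)).ofLp =
      if i = j then 1 else 0 := by
    have := orthonormal_iff_ite.1 H.eigenvectorBasis.orthonormal (p j) (p i)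
    rw [EuclideanSpace.inner_eq_star_dotProduct, star_trivial] at this
    simpa [eq_comm] using this
  rw [dotProduct_mulVec, ← mulVec_transpose, mulVec_mulVec, H.mulVec_eigenvectorBasis,
    smul_dotProduct, smul_eq_mul, dotProduct_comm, horth]
  split_ifs with h
  · subst h
    rw [hsval, mul_one]
  · rw [mul_zero]

theorem isGreatest_trace_mul_mul_transpose {m n r : ℕ} (hrm : r ≤ m) (hrn : r ≤ n)
    (X : Matrix (Fin m) (Fin n) ℝ) :
    IsGreatest {t : ℝ | ∃ (A : Matrix (Fin r) (Fin m) ℝ) (B : Matrix (Fin r) (Fin n) ℝ),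
      A * Aᵀ = 1 ∧ B * Bᵀ = 1 ∧ trace (A * X * Bᵀ) = t} (∑ i ∈ range r, sval X i) := by
  obtain ⟨v, hv⟩ := exists_orthonormalBasis_inner_toLpLin_eq X
  obtain ⟨u, hTv, hu⟩ := exists_orthonormal_smul_eq_of_inner_eq_ite hv
  refine ⟨?_, ?_⟩
  · obtain ⟨a, b, ha, hb, hab⟩ :=
      exists_sum_inner_apply_eq_sum_range _ v hTv hu (by simpa using hrm) hrn
    refine ⟨of fun k => (a k).ofLp, of fun k => (b k).ofLp, ?_, ?_, ?_⟩
    · exact (mul_transpose_self_eq_one_iff_orthonormal _).2 ha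
    · exact (mul_transpose_self_eq_one_iff_orthonormal _).2 hb
    · rw [trace_mul_mul_transpose_eq_sum_inner]
      exact hab
  · rintro t ⟨A, B, hA, hB, rfl⟩
    rw [trace_mul_mul_transpose_eq_sum_inner]
    exact sum_inner_apply_le_sum_range _ v (sval_antitone X) (sval_nonneg X) hTv hu
      ((mul_transpose_self_eq_one_iff_orthonormal A).1 hA)
      ((mul_transpose_self_eq_one_iff_orthonormal B).1 hB)

/-- The truncated nuclear norm `Σ_{i=r+1}^{min(m,n)} σ_i(X)` equals the nuclear norm
`‖X‖_* = Σ_{i=1}^{min(m,n)} σ_i(X)` minus the supremum of `tr(A·X·Bᵀ)` over all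
`A ∈ ℝ^{r×m}`, `B ∈ ℝ^{r×n}` with `A·Aᵀ = I_r`, `B·Bᵀ = I_r`; moreover the supremum
is attained. -/
theorem truncatedNuclearNorm_eq_nuclearNorm_sub_sSup {m n r : ℕ} (hr : r ≤ min m n)
    (X : Matrix (Fin m) (Fin n) ℝ) :
    (∑ i ∈ Finset.Ico r (min m n), sval X i) =
        (∑ i ∈ Finset.range (min m n), sval X i) -
          sSup {t : ℝ | ∃ (A : Matrix (Fin r) (Fin m) ℝ) (B : Matrix (Fin r) (Fin n) ℝ),
            A * Aᵀ = 1 ∧ B * Bᵀ = 1 ∧ Matrix.trace (A * X * Bᵀ) = t} ∧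
      sSup {t : ℝ | ∃ (A : Matrix (Fin r) (Fin m) ℝ) (B : Matrix (Fin r) (Fin n) ℝ),
            A * Aᵀ = 1 ∧ B * Bᵀ = 1 ∧ Matrix.trace (A * X * Bᵀ) = t} ∈
        {t : ℝ | ∃ (A : Matrix (Fin r) (Fin m) ℝ) (B : Matrix (Fin r) (Fin n) ℝ),
            A * Aᵀ = 1 ∧ B * Bᵀ = 1 ∧ Matrix.trace (A * X * Bᵀ) = t} := by
  have h := isGreatest_trace_mul_mul_transpose (hr.trans (min_le_left m n))
    (hr.trans (min_le_right m n)) X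
  rw [h.csSup_eq]
  exact ⟨eq_sub_of_add_eq' (sum_range_add_sum_Ico _ hr), h.1⟩
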